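/- arXiv:2409.09816 — 5 statements merged into one kernel-verified Lean document; each statement's English description precedes it below -/
import Mathlib

section
/- Under the corner construction, the point q₁ lies on the closed segment joining p_i and p_m and the point q₂ lies on the closed segment joining p_m and p_f if and only if min(‖p_m − p_i‖, ‖p_f − p_m‖) ≥ r / tan(α/2). (Lemma 1, existence constraint for the G¹ smoothing of a 3-point polyline.) -/
lemma corner_aux {E : Type*} [NormedAddCommGroup E] [NormedSpace ℝ E]
    (a b : E) (hab : a ≠ b) (t : ℝ) (ht : 0 ≤ t) :
    b + t • ‖a - b‖⁻¹ • (a - b) ∈ segment ℝ a b ↔ t ≤ ‖a - b‖ := by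
  have hn : (0:ℝ) < ‖a - b‖ := by simpa [sub_eq_zero] using hab
  have hba : b - a ≠ 0 := by simpa [sub_eq_zero] using (Ne.symm hab)
  have key : b + t • ‖a - b‖⁻¹ • (a - b) = a + (1 - t / ‖a - b‖) • (b - a) := by
    rw [smul_smul]
    have : (t * ‖a - b‖⁻¹) • (a - b) = -((t / ‖a - b‖) • (b - a)) := by
      rw [div_eq_mul_inv, ← smul_neg, neg_sub]
    rw [this]
    module
  rw [key, segment_eq_image']
  constructor
  · rintro ⟨θ, hθ, hθeq⟩
    have : (θ - (1 - t / ‖a - b‖)) • (b - a) = 0 := by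
      simp only [] at hθeq
      rw [sub_smul]
      have := sub_eq_zero.2 hθeq
      rw [add_sub_add_left_eq_sub] at this
      linear_combination (norm := abel) this
    have hθval : θ = 1 - t / ‖a - b‖ := by
      rcases smul_eq_zero.1 this with h | h
      · linarith [sub_eq_zero.1 h]
      · exact absurd h hba
    have h0 : 0 ≤ θ := hθ.1
    rw [hθval] at h0
    have : t / ‖a - b‖ ≤ 1 := by linarith
    calc t = (t / ‖a - b‖) * ‖a - b‖ := by field_simp
      _ ≤ 1 * ‖a - b‖ := by nlinarith
      _ = ‖a - b‖ := one_mul _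
  · intro h
    refine ⟨1 - t / ‖a - b‖, ⟨by
      have : t / ‖a - b‖ ≤ 1 := (div_le_one hn).2 h
      linarith, by
      have : 0 ≤ t / ‖a - b‖ := div_nonneg ht hn.le
      linarith⟩, rfl⟩

/-- Lemma 1, existence constraint: under the corner construction, the tangent
point `q₁` lies on the closed segment `[p_i, p_m]` and `q₂` lies on `[p_m, p_f]` if and only
if `min ‖p_m − p_i‖ ‖p_f − p_m‖ ≥ r / tan (α/2)`. -/
theorem corner_tangent_points_mem_segments_iff
    (p_i p_m p_f : EuclideanSpace ℝ (Fin 2))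
    (hpi : p_i ≠ p_m) (hpf : p_f ≠ p_m)
    (hncol : ¬ Collinear ℝ ({p_i, p_m, p_f} : Set (EuclideanSpace ℝ (Fin 2))))
    (α : ℝ) (hα : α = EuclideanGeometry.angle p_i p_m p_f)
    (hα0 : 0 < α) (hαπ : α < Real.pi)
    (r : ℝ) (hr : 0 < r)
    (u₁ u₂ : EuclideanSpace ℝ (Fin 2))
    (hu₁ : u₁ = ‖p_i - p_m‖⁻¹ • (p_i - p_m))
    (hu₂ : u₂ = ‖p_f - p_m‖⁻¹ • (p_f - p_m))
    (l : ℝ) (hl : l = r / Real.tan (α / 2))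
    (q₁ q₂ : EuclideanSpace ℝ (Fin 2))
    (hq₁ : q₁ = p_m + l • u₁) (hq₂ : q₂ = p_m + l • u₂) :
    (q₁ ∈ segment ℝ p_i p_m ∧ q₂ ∈ segment ℝ p_m p_f) ↔
      min ‖p_m - p_i‖ ‖p_f - p_m‖ ≥ r / Real.tan (α / 2) := by
  have htan : 0 < Real.tan (α / 2) :=
    Real.tan_pos_of_pos_of_lt_pi_div_two (by linarith) (by linarith)
  have hl0 : 0 ≤ l := by
    rw [hl]; positivity
  have h1 : q₁ ∈ segment ℝ p_i p_m ↔ l ≤ ‖p_i - p_m‖ := by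
    rw [hq₁, hu₁]; exact corner_aux p_i p_m hpi l hl0
  have h2 : q₂ ∈ segment ℝ p_m p_f ↔ l ≤ ‖p_f - p_m‖ := by
    rw [hq₂, hu₂, segment_symm]; exact corner_aux p_f p_m hpf l hl0
  rw [h1, h2, ge_iff_le, le_min_iff, ← hl, norm_sub_rev p_m p_i]
end

section
/- Under the corner construction, the circle of radius r centered at c is tangent to both polyline edges at the points q₁ and q₂; precisely: ⟪c − q₁, p_i − p_m⟫ = 0, ‖c − q₁‖ = r, ⟪c − q₂, p_f − p_m⟫ = 0, and ‖c − q₂‖ = r. (Core tangency claim underlying Lemma 1 and Corollary 3, and the G¹ continuity of the smoothed path at the tangent points.) -/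
open scoped RealInnerProductSpace

/-!
Let `u`, `v` be the unit edge directions and `θ` the angle between them. Then
`‖u + v‖ = 2 cos (θ / 2)`, and the half-angle formulas collapse the offset `c - q₁ = d b - l u` to
`(r / sin θ) (v - ⟪u, v⟫ u)`: a multiple of the component of `v` orthogonal to `u`, whose norm
is `sin θ`.
-/

open Real InnerProductGeometry

section CornerOffset

variable {V : Type*} [NormedAddCommGroup V] [InnerProductSpace ℝ V] {u v : V}

lemma cos_angle_of_norm_eq_one (hu : ‖u‖ = 1) (hv : ‖v‖ = 1) : cos (angle u v) = ⟪u, v⟫ := by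
  rw [cos_angle, hu, hv, mul_one, div_one]

lemma norm_add_eq_two_mul_cos_half_angle (hu : ‖u‖ = 1) (hv : ‖v‖ = 1) :
    ‖u + v‖ = 2 * cos (angle u v / 2) := by
  have hcos_half : 0 ≤ cos (angle u v / 2) :=
    cos_nonneg_of_mem_Icc ⟨by linarith [pi_pos, angle_nonneg u v], by linarith [angle_le_pi u v]⟩
  have hsq : ‖u + v‖ ^ 2 = (2 * cos (angle u v / 2)) ^ 2 := by
    rw [norm_add_sq_real, hu, hv, ← cos_angle_of_norm_eq_one hu hv, mul_pow, cos_sq,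
      mul_div_cancel₀ _ two_ne_zero]
    ring
  exact (pow_left_inj₀ (norm_nonneg _) (by positivity) two_ne_zero).1 hsq

lemma inner_sub_inner_smul_self_eq_zero (hu : ‖u‖ = 1) : ⟪v - ⟪u, v⟫ • u, u⟫ = 0 := by
  rw [inner_sub_left, real_inner_smul_left, inner_self_eq_one_of_norm_eq_one hu, real_inner_comm]
  ring

lemma norm_sub_inner_smul_eq_sin_angle (hu : ‖u‖ = 1) (hv : ‖v‖ = 1) :
    ‖v - ⟪u, v⟫ • u‖ = sin (angle u v) := by
  have hsq : ‖v - ⟪u, v⟫ • u‖ ^ 2 = sin (angle u v) ^ 2 := by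
    rw [← real_inner_self_eq_norm_sq, sin_sq, cos_angle_of_norm_eq_one hu hv]
    simp only [inner_sub_left, inner_sub_right, real_inner_smul_left, real_inner_smul_right,
      inner_self_eq_one_of_norm_eq_one hu, inner_self_eq_one_of_norm_eq_one hv, real_inner_comm u v]
    ring
  exact (pow_left_inj₀ (norm_nonneg _) (sin_angle_nonneg u v) two_ne_zero).1 hsq

/-- `c - q₁` in the corner construction with unit edge directions `u`, `v`. -/
noncomputable def cornerOffset (r : ℝ) (u v : V) : V :=
  (r / sin (angle u v / 2)) • (‖u + v‖⁻¹ • (u + v)) - (r / tan (angle u v / 2)) • u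

lemma cornerOffset_eq (hu : ‖u‖ = 1) (hv : ‖v‖ = 1) (h0 : 0 < angle u v) (hπ : angle u v < π)
    (r : ℝ) : cornerOffset r u v = (r / sin (angle u v)) • (v - ⟪u, v⟫ • u) := by
  rw [cornerOffset, norm_add_eq_two_mul_cos_half_angle hu hv, ← cos_angle_of_norm_eq_one hu hv]
  set θ := angle u v
  have hsin : sin (θ / 2) ≠ 0 := (sin_pos_of_pos_of_lt_pi (by linarith) (by linarith)).ne'
  have hcos : cos (θ / 2) ≠ 0 := (cos_pos_of_mem_Ioo ⟨by linarith, by linarith⟩).ne'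
  have hsin_two : sin θ = 2 * sin (θ / 2) * cos (θ / 2) := by
    rw [← sin_two_mul, mul_div_cancel₀ _ two_ne_zero]
  have hcos_two : cos θ = 2 * cos (θ / 2) ^ 2 - 1 := by
    rw [← cos_two_mul, mul_div_cancel₀ _ two_ne_zero]
  rw [tan_eq_sin_div_cos, hsin_two, hcos_two]
  match_scalars
  · field_simp
    ring
  · field_simp

lemma inner_cornerOffset_eq_zero (hu : ‖u‖ = 1) (hv : ‖v‖ = 1) (h0 : 0 < angle u v)
    (hπ : angle u v < π) (r : ℝ) : ⟪cornerOffset r u v, u⟫ = 0 := by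
  rw [cornerOffset_eq hu hv h0 hπ, real_inner_smul_left, inner_sub_inner_smul_self_eq_zero hu,
    mul_zero]

lemma norm_cornerOffset (hu : ‖u‖ = 1) (hv : ‖v‖ = 1) (h0 : 0 < angle u v) (hπ : angle u v < π)
    {r : ℝ} (hr : 0 ≤ r) : ‖cornerOffset r u v‖ = r := by
  have hsin : 0 < sin (angle u v) := sin_pos_of_pos_of_lt_pi h0 hπ
  rw [cornerOffset_eq hu hv h0 hπ, norm_smul, norm_sub_inner_smul_eq_sin_angle hu hv,
    Real.norm_of_nonneg (div_nonneg hr hsin.le), div_mul_cancel₀ _ hsin.ne']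


lemma angle_inv_norm_smul_inv_norm_smul {x y : V} (hx : x ≠ 0) (hy : y ≠ 0) :
    angle (‖x‖⁻¹ • x) (‖y‖⁻¹ • y) = angle x y := by
  rw [angle_smul_left_of_pos _ _ (inv_pos.2 (norm_pos_iff.2 hx)),
    angle_smul_right_of_pos _ _ (inv_pos.2 (norm_pos_iff.2 hy))]

lemma cornerOffset_inv_norm_smul_tangent {x y : V} (hx : x ≠ 0) (hy : y ≠ 0)
    (h0 : 0 < angle x y) (hπ : angle x y < π) {r : ℝ} (hr : 0 ≤ r) :
    ⟪cornerOffset r (‖x‖⁻¹ • x) (‖y‖⁻¹ • y), x⟫ = 0 ∧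
      ‖cornerOffset r (‖x‖⁻¹ • x) (‖y‖⁻¹ • y)‖ = r := by
  have hx1 : ‖‖x‖⁻¹ • x‖ = 1 := norm_smul_inv_norm hx
  have hy1 : ‖‖y‖⁻¹ • y‖ = 1 := norm_smul_inv_norm hy
  rw [← angle_inv_norm_smul_inv_norm_smul hx hy] at h0 hπ
  have horth := inner_cornerOffset_eq_zero hx1 hy1 h0 hπ r
  rw [real_inner_smul_right] at horth
  exact ⟨(mul_eq_zero.1 horth).resolve_left (inv_ne_zero (norm_ne_zero_iff.2 hx)),
    norm_cornerOffset hx1 hy1 h0 hπ hr⟩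

end CornerOffset

theorem corner_circle_tangent_at_tangent_points_general
    (p_i p_m p_f : EuclideanSpace ℝ (Fin 2))
    (hpi : p_i ≠ p_m) (hpf : p_f ≠ p_m)
    (α : ℝ) (hα : α = EuclideanGeometry.angle p_i p_m p_f)
    (hα0 : 0 < α) (hαπ : α < Real.pi)
    (r : ℝ) (hr : 0 < r)
    (u₁ u₂ : EuclideanSpace ℝ (Fin 2))
    (hu₁ : u₁ = ‖p_i - p_m‖⁻¹ • (p_i - p_m))
    (hu₂ : u₂ = ‖p_f - p_m‖⁻¹ • (p_f - p_m))
    (l d : ℝ) (hl : l = r / Real.tan (α / 2)) (hd : d = r / Real.sin (α / 2))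
    (b : EuclideanSpace ℝ (Fin 2)) (hb : b = ‖u₁ + u₂‖⁻¹ • (u₁ + u₂))
    (c : EuclideanSpace ℝ (Fin 2)) (hc : c = p_m + d • b)
    (q₁ q₂ : EuclideanSpace ℝ (Fin 2))
    (hq₁ : q₁ = p_m + l • u₁) (hq₂ : q₂ = p_m + l • u₂) :
    ⟪c - q₁, p_i - p_m⟫ = 0 ∧ ‖c - q₁‖ = r ∧
    ⟪c - q₂, p_f - p_m⟫ = 0 ∧ ‖c - q₂‖ = r := by
  have hpi' : p_i - p_m ≠ 0 := sub_ne_zero.2 hpi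
  have hpf' : p_f - p_m ≠ 0 := sub_ne_zero.2 hpf
  have hangle : angle (p_i - p_m) (p_f - p_m) = α := hα.symm
  have hangle' : angle (p_f - p_m) (p_i - p_m) = α := angle_comm (p_i - p_m) (p_f - p_m) ▸ hangle
  have hc₁ : c - q₁ = cornerOffset r u₁ u₂ := by
    rw [cornerOffset, hu₁, hu₂, angle_inv_norm_smul_inv_norm_smul hpi' hpf', hangle, ← hu₁, ← hu₂,
      hc, hq₁, hb, hd, hl]
    abel
  have hc₂ : c - q₂ = cornerOffset r u₂ u₁ := by
    rw [cornerOffset, hu₁, hu₂, angle_inv_norm_smul_inv_norm_smul hpf' hpi', hangle', ← hu₁, ← hu₂,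
      hc, hq₂, hb, hd, hl, add_comm u₁ u₂]
    abel
  rw [hc₁, hc₂, hu₁, hu₂]
  exact and_assoc.1
    ⟨cornerOffset_inv_norm_smul_tangent hpi' hpf' (hangle ▸ hα0) (hangle ▸ hαπ) hr.le,
      cornerOffset_inv_norm_smul_tangent hpf' hpi' (hangle' ▸ hα0) (hangle' ▸ hαπ) hr.le⟩

/-- tangency claim behind Lemma 1 / Corollary 3: under the corner construction,
the circle of radius `r` centered at `c` is tangent to both polyline edges at `q₁` and `q₂`:
`⟪c − q₁, p_i − p_m⟫ = 0`, `‖c − q₁‖ = r`, `⟪c − q₂, p_f − p_m⟫ = 0`, `‖c − q₂‖ = r`. -/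
theorem corner_circle_tangent_at_tangent_points
    (p_i p_m p_f : EuclideanSpace ℝ (Fin 2))
    (hpi : p_i ≠ p_m) (hpf : p_f ≠ p_m)
    (hncol : ¬ Collinear ℝ ({p_i, p_m, p_f} : Set (EuclideanSpace ℝ (Fin 2))))
    (α : ℝ) (hα : α = EuclideanGeometry.angle p_i p_m p_f)
    (hα0 : 0 < α) (hαπ : α < Real.pi)
    (r : ℝ) (hr : 0 < r)
    (u₁ u₂ : EuclideanSpace ℝ (Fin 2))
    (hu₁ : u₁ = ‖p_i - p_m‖⁻¹ • (p_i - p_m))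
    (hu₂ : u₂ = ‖p_f - p_m‖⁻¹ • (p_f - p_m))
    (l d : ℝ) (hl : l = r / Real.tan (α / 2)) (hd : d = r / Real.sin (α / 2))
    (b : EuclideanSpace ℝ (Fin 2)) (hb : b = ‖u₁ + u₂‖⁻¹ • (u₁ + u₂))
    (c : EuclideanSpace ℝ (Fin 2)) (hc : c = p_m + d • b)
    (q₁ q₂ : EuclideanSpace ℝ (Fin 2))
    (hq₁ : q₁ = p_m + l • u₁) (hq₂ : q₂ = p_m + l • u₂) :
    ⟪c - q₁, p_i - p_m⟫ = 0 ∧ ‖c - q₁‖ = r ∧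
    ⟪c - q₂, p_f - p_m⟫ = 0 ∧ ‖c - q₂‖ = r :=
  corner_circle_tangent_at_tangent_points_general p_i p_m p_f hpi hpf α hα hα0 hαπ r hr u₁ u₂ hu₁
    hu₂ l d hl hd b hb c hc q₁ q₂ hq₁ hq₂
end

section
/- Under the corner construction, let H be the orthogonal projection of q₂ onto the line through p_i and p_m. Then ‖q₁ − H‖ = r·sin α. (Key identity in the proof of Theorem 1, showing the constructed path length matches the optimal Dubins length of the straight segment.) -/
/-!
Since `u₁`, `u₂` are unit vectors with `⟪u₁, u₂⟫ = cos α`, the vector `l • u₂ - (l cos α) • u₁` is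
orthogonal to `u₁`, so by Pythagoras the unique distance minimizer on the line is its foot
`H = p_m + (l cos α) • u₁`. Hence `‖q₁ - H‖ = l (1 - cos α)`, and with `l = r cos(α/2) / sin(α/2)`,
`1 - cos α = 2 sin²(α/2)` this is `2 r sin(α/2) cos(α/2) = r sin α`.
-/

open Real InnerProductGeometry
open scoped RealInnerProductSpace

-- Unconditional: where `sin (α / 2)` or `cos (α / 2)` vanishes, both sides are `0` (`x / 0 = 0`).
theorem div_tan_half_mul_one_sub_cos (r α : ℝ) :
    r / tan (α / 2) * (1 - cos α) = r * sin α := by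
  obtain ⟨x, rfl⟩ : ∃ x, α = 2 * x := ⟨α / 2, by ring⟩
  rw [mul_div_cancel_left₀ x two_ne_zero, tan_eq_sin_div_cos, sin_two_mul, cos_two_mul, cos_sq']
  rcases eq_or_ne (sin x) 0 with hs | hs
  · simp [hs]
  rcases eq_or_ne (cos x) 0 with hc | hc
  · simp [hc]
  field_simp
  ring

section
variable {V : Type*} [NormedAddCommGroup V] [InnerProductSpace ℝ V]

theorem inner_inv_norm_smul_eq_cos_angle (x y : V) :
    ⟪‖x‖⁻¹ • x, ‖y‖⁻¹ • y⟫ = cos (angle x y) := by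
  rw [cos_angle, real_inner_smul_left, real_inner_smul_right, div_eq_mul_inv, mul_inv]
  ring

theorem inner_sub_inner_smul_eq_zero {u : V} (hu : ‖u‖ = 1) (v : V) :
    ⟪v - ⟪u, v⟫ • u, u⟫ = 0 := by
  rw [inner_sub_left, real_inner_smul_left, real_inner_self_eq_norm_sq, hu, real_inner_comm]
  ring

theorem eq_of_forall_dist_le_of_inner_sub_eq_zero {p m q h h₀ : V}
    (hh : h ∈ line[ℝ, p, m]) (hmin : ∀ x ∈ line[ℝ, p, m], dist q h ≤ dist q x)
    (hh₀ : h₀ ∈ line[ℝ, p, m]) (horth : ⟪q - h₀, p - m⟫ = 0) : h = h₀ := by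
  obtain ⟨t, ht⟩ : ∃ t : ℝ, t • (p - m) = h - h₀ := by
    have := AffineSubspace.vsub_mem_direction hh hh₀
    rwa [direction_affineSpan, mem_vectorSpan_pair] at this
  have hpyth : ‖q - h‖ * ‖q - h‖ = ‖q - h₀‖ * ‖q - h₀‖ + ‖h - h₀‖ * ‖h - h₀‖ := by
    rw [← sub_sub_sub_cancel_right q h h₀]
    refine norm_sub_sq_eq_norm_sq_add_norm_sq_real ?_
    rw [← ht, real_inner_smul_right, horth, mul_zero]
  have hle : ‖q - h‖ ≤ ‖q - h₀‖ := by simpa only [dist_eq_norm] using hmin h₀ hh₀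
  have : ‖h - h₀‖ = 0 := by nlinarith [norm_nonneg (q - h), norm_nonneg (h - h₀)]
  exact sub_eq_zero.1 (norm_eq_zero.1 this)

end

theorem corner_projection_identity_general
    (p_i p_m p_f : EuclideanSpace ℝ (Fin 2))
    (hpi : p_i ≠ p_m)
    (α : ℝ) (hα : α = EuclideanGeometry.angle p_i p_m p_f)
    (r : ℝ) (hr : 0 < r)
    (u₁ u₂ : EuclideanSpace ℝ (Fin 2))
    (hu₁ : u₁ = ‖p_i - p_m‖⁻¹ • (p_i - p_m))
    (hu₂ : u₂ = ‖p_f - p_m‖⁻¹ • (p_f - p_m))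
    (l : ℝ) (hl : l = r / Real.tan (α / 2))
    (q₁ q₂ : EuclideanSpace ℝ (Fin 2))
    (hq₁ : q₁ = p_m + l • u₁) (hq₂ : q₂ = p_m + l • u₂)
    (H : EuclideanSpace ℝ (Fin 2))
    (hH : H ∈ affineSpan ℝ ({p_i, p_m} : Set (EuclideanSpace ℝ (Fin 2))))
    (hHmin : ∀ x ∈ affineSpan ℝ ({p_i, p_m} : Set (EuclideanSpace ℝ (Fin 2))),
      dist q₂ H ≤ dist q₂ x) :
    ‖q₁ - H‖ = r * Real.sin α := by
  have hu₁_norm : ‖u₁‖ = 1 := hu₁ ▸ norm_smul_inv_norm (sub_ne_zero.2 hpi)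
  have hcos : cos α = ⟪u₁, u₂⟫ := by
    rw [hα, hu₁, hu₂, inner_inv_norm_smul_eq_cos_angle]
    rfl
  have hfoot : H = p_m + (l * cos α) • u₁ := by
    refine eq_of_forall_dist_le_of_inner_sub_eq_zero hH hHmin ?_ ?_
    · rw [hu₁, smul_smul, add_comm]
      exact smul_vsub_rev_vadd_mem_affineSpan_pair _ _ _
    · have hdir : p_i - p_m = ‖p_i - p_m‖ • u₁ := by
        rw [hu₁, smul_smul, mul_inv_cancel₀ (norm_ne_zero_iff.2 (sub_ne_zero.2 hpi)), one_smul]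
      rw [hdir, real_inner_smul_right, hq₂, add_sub_add_left_eq_sub, hcos, mul_smul, ← smul_sub,
        real_inner_smul_left, inner_sub_inner_smul_eq_zero hu₁_norm, mul_zero, mul_zero]
  have hq₁H : q₁ - H = (l * (1 - cos α)) • u₁ := by
    rw [hfoot, hq₁]
    module
  rw [hq₁H, norm_smul, hu₁_norm, mul_one, hl, div_tan_half_mul_one_sub_cos, norm_of_nonneg]
  exact mul_nonneg hr.le (hα ▸ sin_angle_nonneg _ _)

/-- key identity in the proof of Theorem 1: under the corner construction, if
`H` is the orthogonal projection of `q₂` onto the line through `p_i` and `p_m` (the point of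
that line minimizing the distance to `q₂`), then `‖q₁ − H‖ = r · sin α`. -/
theorem corner_projection_identity
    (p_i p_m p_f : EuclideanSpace ℝ (Fin 2))
    (hpi : p_i ≠ p_m) (hpf : p_f ≠ p_m)
    (hncol : ¬ Collinear ℝ ({p_i, p_m, p_f} : Set (EuclideanSpace ℝ (Fin 2))))
    (α : ℝ) (hα : α = EuclideanGeometry.angle p_i p_m p_f)
    (hα0 : 0 < α) (hαπ : α < Real.pi)
    (r : ℝ) (hr : 0 < r)
    (u₁ u₂ : EuclideanSpace ℝ (Fin 2))
    (hu₁ : u₁ = ‖p_i - p_m‖⁻¹ • (p_i - p_m))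
    (hu₂ : u₂ = ‖p_f - p_m‖⁻¹ • (p_f - p_m))
    (l d : ℝ) (hl : l = r / Real.tan (α / 2)) (hd : d = r / Real.sin (α / 2))
    (b : EuclideanSpace ℝ (Fin 2)) (hb : b = ‖u₁ + u₂‖⁻¹ • (u₁ + u₂))
    (c : EuclideanSpace ℝ (Fin 2)) (hc : c = p_m + d • b)
    (q₁ q₂ : EuclideanSpace ℝ (Fin 2))
    (hq₁ : q₁ = p_m + l • u₁) (hq₂ : q₂ = p_m + l • u₂)
    (H : EuclideanSpace ℝ (Fin 2))
    (hH : H ∈ affineSpan ℝ ({p_i, p_m} : Set (EuclideanSpace ℝ (Fin 2))))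
    (hHmin : ∀ x ∈ affineSpan ℝ ({p_i, p_m} : Set (EuclideanSpace ℝ (Fin 2))),
      dist q₂ H ≤ dist q₂ x) :
    ‖q₁ - H‖ = r * Real.sin α :=
  corner_projection_identity_general p_i p_m p_f hpi α hα r hr u₁ u₂ hu₁ hu₂ l hl q₁ q₂ hq₁ hq₂ H hH
    hHmin
end

section
/- Under the corner construction, if additionally l ≤ ‖p_m − p_i‖ and l ≤ ‖p_f − p_m‖, then the smoothed corner path is not longer than the polyline: ‖p_i − q₁‖ + r·(π − α) + ‖q₂ − p_f‖ ≤ ‖p_i − p_m‖ + ‖p_m − p_f‖. (Lemma: Q is shorter than P, 3-point case.) -/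
lemma norm_sub_smul_unit {E : Type*} [NormedAddCommGroup E] [NormedSpace ℝ E]
    (v : E) (hv : v ≠ 0) (l : ℝ) (h1 : l ≤ ‖v‖) :
    ‖v - l • (‖v‖⁻¹ • v)‖ = ‖v‖ - l := by
  have hn : (0:ℝ) < ‖v‖ := norm_pos_iff.mpr hv
  have : v - l • (‖v‖⁻¹ • v) = (1 - l * ‖v‖⁻¹) • v := by
    rw [sub_smul, one_smul, smul_smul]
  rw [this, norm_smul, Real.norm_eq_abs, abs_of_nonneg, sub_mul, one_mul,
    mul_assoc, inv_mul_cancel₀ hn.ne', mul_one]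
  have : l * ‖v‖⁻¹ ≤ 1 := by
    rw [← div_eq_mul_inv, div_le_one hn]; exact h1
  linarith


/-- Q is shorter than P, 3-point case: under the corner construction, if
`l ≤ ‖p_m − p_i‖` and `l ≤ ‖p_f − p_m‖`, then
`‖p_i − q₁‖ + r·(π − α) + ‖q₂ − p_f‖ ≤ ‖p_i − p_m‖ + ‖p_m − p_f‖`. -/
theorem smoothed_corner_not_longer_than_polyline
    (p_i p_m p_f : EuclideanSpace ℝ (Fin 2))
    (hpi : p_i ≠ p_m) (hpf : p_f ≠ p_m)
    (hncol : ¬ Collinear ℝ ({p_i, p_m, p_f} : Set (EuclideanSpace ℝ (Fin 2))))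
    (α : ℝ) (hα : α = EuclideanGeometry.angle p_i p_m p_f)
    (hα0 : 0 < α) (hαπ : α < Real.pi)
    (r : ℝ) (hr : 0 < r)
    (u₁ u₂ : EuclideanSpace ℝ (Fin 2))
    (hu₁ : u₁ = ‖p_i - p_m‖⁻¹ • (p_i - p_m))
    (hu₂ : u₂ = ‖p_f - p_m‖⁻¹ • (p_f - p_m))
    (l d : ℝ) (hl : l = r / Real.tan (α / 2)) (hd : d = r / Real.sin (α / 2))
    (b : EuclideanSpace ℝ (Fin 2)) (hb : b = ‖u₁ + u₂‖⁻¹ • (u₁ + u₂))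
    (c : EuclideanSpace ℝ (Fin 2)) (hc : c = p_m + d • b)
    (q₁ q₂ : EuclideanSpace ℝ (Fin 2))
    (hq₁ : q₁ = p_m + l • u₁) (hq₂ : q₂ = p_m + l • u₂)
    (hl₁ : l ≤ ‖p_m - p_i‖) (hl₂ : l ≤ ‖p_f - p_m‖) :
    ‖p_i - q₁‖ + r * (Real.pi - α) + ‖q₂ - p_f‖ ≤ ‖p_i - p_m‖ + ‖p_m - p_f‖ := by
  have h2 : α / 2 < Real.pi / 2 := by linarith
  have h20 : 0 < α / 2 := by linarith
  have htan : 0 < Real.tan (α / 2) := Real.tan_pos_of_pos_of_lt_pi_div_two h20 h2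
  -- key trig inequality: r * (π - α) ≤ 2 * l
  have hx0 : 0 < Real.pi / 2 - α / 2 := by linarith
  have hx2 : Real.pi / 2 - α / 2 < Real.pi / 2 := by linarith
  have hkey : Real.pi / 2 - α / 2 < (Real.tan (α / 2))⁻¹ := by
    have := Real.lt_tan hx0 hx2
    rwa [Real.tan_pi_div_two_sub] at this
  have harc : r * (Real.pi - α) ≤ 2 * l := by
    rw [hl, div_eq_mul_inv]
    have h1 : r * (Real.pi - α) = 2 * r * (Real.pi / 2 - α / 2) := by ring
    rw [h1]
    nlinarith [hkey, hr]
  have hn1 : ‖p_i - p_m‖ = ‖p_m - p_i‖ := norm_sub_rev _ _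
  have hv1 : (p_i - p_m : EuclideanSpace ℝ (Fin 2)) ≠ 0 := sub_ne_zero.mpr hpi
  have hv2 : (p_f - p_m : EuclideanSpace ℝ (Fin 2)) ≠ 0 := sub_ne_zero.mpr hpf
  have e1 : ‖p_i - q₁‖ = ‖p_i - p_m‖ - l := by
    have : p_i - q₁ = (p_i - p_m) - l • (‖p_i - p_m‖⁻¹ • (p_i - p_m)) := by
      rw [hq₁, hu₁]; abel
    rw [this, norm_sub_smul_unit _ hv1 _ (by rw [hn1]; exact hl₁)]
  have e2 : ‖q₂ - p_f‖ = ‖p_f - p_m‖ - l := by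
    have : q₂ - p_f = -((p_f - p_m) - l • (‖p_f - p_m‖⁻¹ • (p_f - p_m))) := by
      rw [hq₂, hu₂]; abel
    rw [this, norm_neg, norm_sub_smul_unit _ hv2 _ hl₂]
  have hn2 : ‖p_m - p_f‖ = ‖p_f - p_m‖ := norm_sub_rev _ _
  rw [e1, e2, hn2]
  linarith
end

section
/- Let n ≥ 3 and let p₀, …, p_{n−1} be a polyline in the Euclidean plane ℝ² with consecutive points distinct and every triple of consecutive points non-collinear; let r > 0, let α_j ∈ (0, π) be the interior angle at each interior vertex p_j (1 ≤ j ≤ n−2), and set l_j = r/tan(α_j/2) for interior vertices and l₀ = l_{n−1} = 0. Assume ‖p_{j+1} − p_j‖ ≥ l_j + l_{j+1} for all 0 ≤ j ≤ n−2. Then the total smoothed path length, Σ_{j=0}^{n−2} (‖p_{j+1} − p_j‖ − l_j − l_{j+1}) + Σ_{j=1}^{n−2} r·(π − α_j), is at most the polyline length Σ_{j=0}^{n−2} ‖p_{j+1} − p_j‖. (Lemma: the smoothed path Q has total length not longer than the polyline P.) -/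
/-!
The straight pieces of the smoothed path lose `l j + l (j+1)` on each edge, so in total every
interior vertex costs `2 l j = 2 r cot (α j / 2) = 2 r tan θ` with `θ = (π - α j) / 2`, while its
arc has length `r (π - α j) = 2 r θ`. Hence the claim reduces to `θ ≤ tan θ` on `(0, π/2)`.
-/

open Finset Real

theorem sum_range_add_succ_eq {M : Type*} [AddCommMonoid M] (l : ℕ → M) (m : ℕ) :
    ∑ j ∈ range (m + 1), (l j + l (j + 1)) = l 0 + ∑ j ∈ Icc 1 m, 2 • l j + l (m + 1) := by
  rw [sum_add_distrib, sum_range_succ', sum_range_succ, ← Ico_add_one_right_eq_Icc,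
    sum_Ico_eq_sum_range, add_tsub_cancel_right]
  simp only [add_comm 1, two_nsmul, sum_add_distrib]
  abel

theorem arc_length_le_two_mul_tangent_length {r α : ℝ} (hr : 0 ≤ r) (hα : α ∈ Set.Ioo 0 π) :
    r * (π - α) ≤ 2 * (r / tan (α / 2)) := by
  obtain ⟨hα_pos, hα_lt⟩ := hα
  set θ := π / 2 - α / 2 with hθ
  have hcot : r / tan (α / 2) = r * tan θ := by
    rw [show α / 2 = π / 2 - θ by ring, tan_pi_div_two_sub, div_inv_eq_mul]
  have hθ_le : θ ≤ tan θ := (lt_tan (by linarith) (by linarith)).le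
  calc r * (π - α) = 2 * (r * θ) := by ring
    _ ≤ 2 * (r * tan θ) := by gcongr
    _ = 2 * (r / tan (α / 2)) := by rw [hcot]

theorem smoothed_path_not_longer_than_polyline_general
    (n : ℕ) (hn : 3 ≤ n)
    (p : ℕ → EuclideanSpace ℝ (Fin 2))
    (r : ℝ) (hr : 0 < r)
    (α : ℕ → ℝ)
    (hα0 : ∀ j, 1 ≤ j → j ≤ n - 2 → α j ∈ Set.Ioo 0 Real.pi)
    (l : ℕ → ℝ)
    (hl : ∀ j, 1 ≤ j → j ≤ n - 2 → l j = r / Real.tan (α j / 2))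
    (hl0 : l 0 = 0) (hln : l (n - 1) = 0) :
    (∑ j ∈ Finset.range (n - 1), (‖p (j + 1) - p j‖ - l j - l (j + 1))) +
      (∑ j ∈ Finset.Icc 1 (n - 2), r * (Real.pi - α j)) ≤
    ∑ j ∈ Finset.range (n - 1), ‖p (j + 1) - p j‖ := by
  obtain ⟨m, rfl⟩ : ∃ m, n = m + 2 := ⟨n - 2, by omega⟩
  simp only [show m + 2 - 1 = m + 1 by omega, show m + 2 - 2 = m by omega] at hα0 hl hln ⊢
  have harcs : ∑ j ∈ Icc 1 m, r * (π - α j) ≤ ∑ j ∈ Icc 1 m, 2 • l j := by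
    refine sum_le_sum fun j hj => ?_
    obtain ⟨hj1, hjm⟩ := mem_Icc.mp hj
    rw [nsmul_eq_mul, Nat.cast_ofNat, hl j hj1 hjm]
    exact arc_length_le_two_mul_tangent_length hr.le (hα0 j hj1 hjm)
  have htangents := sum_range_add_succ_eq l m
  rw [hl0, hln, zero_add, add_zero] at htangents
  simp only [sub_sub, sum_sub_distrib]
  linarith

/-- the smoothed path Q is not longer than the polyline P: for a polyline
`p 0, …, p (n−1)` (`n ≥ 3`) with consecutive points distinct, consecutive triples
non-collinear, interior angles `α j ∈ (0, π)`, tangent lengths `l j = r / tan (α j / 2)`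
(with `l 0 = l (n−1) = 0`) and edges long enough (`‖p (j+1) − p j‖ ≥ l j + l (j+1)`), the
total smoothed length (straight pieces plus arcs `r·(π − α j)`) is at most the polyline
length. -/
theorem smoothed_path_not_longer_than_polyline
    (n : ℕ) (hn : 3 ≤ n)
    (p : ℕ → EuclideanSpace ℝ (Fin 2))
    (hdist : ∀ j, j ≤ n - 2 → p j ≠ p (j + 1))
    (hncol : ∀ j, 1 ≤ j → j ≤ n - 2 →
      ¬ Collinear ℝ ({p (j - 1), p j, p (j + 1)} : Set (EuclideanSpace ℝ (Fin 2))))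
    (r : ℝ) (hr : 0 < r)
    (α : ℕ → ℝ)
    (hα : ∀ j, 1 ≤ j → j ≤ n - 2 → α j = EuclideanGeometry.angle (p (j - 1)) (p j) (p (j + 1)))
    (hα0 : ∀ j, 1 ≤ j → j ≤ n - 2 → α j ∈ Set.Ioo 0 Real.pi)
    (l : ℕ → ℝ)
    (hl : ∀ j, 1 ≤ j → j ≤ n - 2 → l j = r / Real.tan (α j / 2))
    (hl0 : l 0 = 0) (hln : l (n - 1) = 0)
    (hedge : ∀ j, j ≤ n - 2 → ‖p (j + 1) - p j‖ ≥ l j + l (j + 1)) :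
    (∑ j ∈ Finset.range (n - 1), (‖p (j + 1) - p j‖ - l j - l (j + 1))) +
      (∑ j ∈ Finset.Icc 1 (n - 2), r * (Real.pi - α j)) ≤
    ∑ j ∈ Finset.range (n - 1), ‖p (j + 1) - p j‖ :=
  smoothed_path_not_longer_than_polyline_general n hn p r hr α hα0 l hl hl0 hln
end
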